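/- arXiv:1502.00423 — 3 statements merged into one kernel-verified Lean document; each statement's English description precedes it below -/
import Mathlib

section
/- Let f : ℝ → ℝ be continuous and nondecreasing, ν > 0, x₁ < x₂, γ ∈ (x₁ + t, x₂ + t), and g(x) = -ν(x - x₂) on [x₁,x₂), g = 0 elsewhere. If f(v)-f(u) < ν(v-u) for all u < v in [x₁+t, γ] and f(v)-f(u) ≥ ν(v-u) for all u ≤ v in [γ, x₂+t], then x ↦ f(x+t)+g(x) attains its minimum over [x₁, x₂] at x = γ - t. -/
/-- The jump function `g(x) = -ν (x - x₂)` on `[x₁, x₂)` and `0` elsewhere. -/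
noncomputable def gfun (ν x₁ x₂ : ℝ) : ℝ → ℝ := fun x =>
  if x₁ ≤ x ∧ x < x₂ then -ν * (x - x₂) else 0

theorem min_at_slope_change
    (f : ℝ → ℝ) (ν x₁ x₂ t γ : ℝ)
    (hfc : Continuous f) (hfm : Monotone f)
    (hν : 0 < ν) (hx : x₁ < x₂)
    (hγ : x₁ + t < γ ∧ γ < x₂ + t)
    (hslope₁ : ∀ u v : ℝ, x₁ + t ≤ u → u < v → v ≤ γ →
      f v - f u < ν * (v - u))
    (hslope₂ : ∀ u v : ℝ, γ ≤ u → u ≤ v → v ≤ x₂ + t →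
      ν * (v - u) ≤ f v - f u) :
    ∀ x ∈ Set.Icc x₁ x₂,
      f ((γ - t) + t) + gfun ν x₁ x₂ (γ - t) ≤ f (x + t) + gfun ν x₁ x₂ x := by
  intro x hxmem
  obtain ⟨hx1, hx2⟩ := hxmem
  obtain ⟨hγ1, hγ2⟩ := hγ
  have hγt1 : x₁ ≤ γ - t := by linarith
  have hγt2 : γ - t < x₂ := by linarith
  have hgγ : gfun ν x₁ x₂ (γ - t) = -ν * (γ - t - x₂) := by
    simp [gfun, hγt1, hγt2]
  rw [hgγ]
  have hγt : γ - t + t = γ := by ring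
  rw [hγt]
  rcases eq_or_lt_of_le hx2 with hx2' | hx2'
  · -- x = x₂
    have hg : gfun ν x₁ x₂ x = 0 := by
      simp [gfun, hx2']
    rw [hg, hx2']
    have := hslope₂ γ (x₂ + t) le_rfl (by linarith) le_rfl
    nlinarith
  · have hg : gfun ν x₁ x₂ x = -ν * (x - x₂) := by
      simp [gfun, hx1, hx2']
    rw [hg]
    rcases lt_trichotomy x (γ - t) with h | h | h
    · have := hslope₁ (x + t) γ (by linarith) (by linarith) le_rfl
      nlinarith
    · rw [h]; ring_nf; rfl
    · have := hslope₂ γ (x + t) le_rfl (by linarith) (by linarith)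
      nlinarith
end

section
/- Let f : ℝ → ℝ be continuous nondecreasing, ν > 0, x₁ < x₂, and g(x) = -ν(x - x₂) on [x₁,x₂), g = 0 elsewhere. Define φ(t) = f(x₁ + t) + ν(x₂ - x₁) - f(x₂ + t). If f(v)-f(u) ≥ ν(v-u) on [x₁+t, β] and f(v)-f(u) < ν(v-u) on [β, x₂+t] for some β ∈ (x₁+t, x₂+t) (so f(x+t)+g(x) has its maximum interior to [x₁,x₂]), then the minimum of f(x+t)+g(x) over [x₁,x₂] is attained at x₁ if φ(t) < 0, and at x₂ if φ(t) > 0. -/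
theorem min_at_endpoint_depending_on_sign
    (f : ℝ → ℝ) (ν x₁ x₂ t β : ℝ)
    (hfc : Continuous f) (hfm : Monotone f)
    (hν : 0 < ν) (hx : x₁ < x₂)
    (hβ : x₁ + t < β ∧ β < x₂ + t)
    (hslope₁ : ∀ u v : ℝ, x₁ + t ≤ u → u ≤ v → v ≤ β →
      ν * (v - u) ≤ f v - f u)
    (hslope₂ : ∀ u v : ℝ, β ≤ u → u < v → v ≤ x₂ + t →
      f v - f u < ν * (v - u)) :
    (f (x₁ + t) + ν * (x₂ - x₁) - f (x₂ + t) < 0 →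
      ∀ x ∈ Set.Icc x₁ x₂,
        f (x₁ + t) + gfun ν x₁ x₂ x₁ ≤ f (x + t) + gfun ν x₁ x₂ x) ∧
    (0 < f (x₁ + t) + ν * (x₂ - x₁) - f (x₂ + t) →
      ∀ x ∈ Set.Icc x₁ x₂,
        f (x₂ + t) + gfun ν x₁ x₂ x₂ ≤ f (x + t) + gfun ν x₁ x₂ x) := by
  have gx₁ : gfun ν x₁ x₂ x₁ = ν * (x₂ - x₁) := by
    simp only [gfun, le_refl, hx, and_self, if_true, true_and]
    ring
  have gx₂ : gfun ν x₁ x₂ x₂ = 0 := by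
    simp [gfun]
  have key : ∀ x ∈ Set.Icc x₁ x₂, x < x₂ →
      (x + t ≤ β → f (x₁ + t) + ν * (x₂ - x₁) ≤ f (x + t) + gfun ν x₁ x₂ x) ∧
      (β < x + t → f (x₂ + t) < f (x + t) + gfun ν x₁ x₂ x) := by
    rintro x ⟨hx1, hx2⟩ hxlt
    have hg : gfun ν x₁ x₂ x = ν * (x₂ - x) := by
      simp only [gfun, hx1, hxlt, and_self, if_true, true_and]
      ring
    constructor
    · intro hle
      have := hslope₁ (x₁ + t) (x + t) le_rfl (by linarith) hle
      rw [hg]; nlinarith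
    · intro hlt
      have := hslope₂ (x + t) (x₂ + t) hlt.le (by linarith) le_rfl
      rw [hg]; nlinarith
  constructor
  · intro hφ x hxm
    rw [gx₁]
    rcases eq_or_lt_of_le hxm.2 with h | h
    · subst h; rw [gx₂]; linarith
    · rcases le_or_gt (x + t) β with hc | hc
      · exact (key x hxm h).1 hc
      · have := (key x hxm h).2 hc; linarith
  · intro hφ x hxm
    rw [gx₂]
    rcases eq_or_lt_of_le hxm.2 with h | h
    · subst h; rw [gx₂]
    · rcases le_or_gt (x + t) β with hc | hc
      · have := (key x hxm h).1 hc; linarith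
      · have := (key x hxm h).2 hc; linarith
end

section
/- Under the hypotheses of the single-slope-change case (f continuous nondecreasing, slopes < ν before γ and ≥ ν after γ, ν > 0, x₁ < x₂, x°(t) = x₂ for t < γ - x₂, x°(t) = γ - t on [γ-x₂, γ-x₁), x°(t) = x₁ for t ≥ γ - x₁, g(x) = -ν(x-x₂) on [x₁,x₂) else 0), the function h(t) = f(x°(t) + t) + g(x°(t)) equals f(x₂ + t) for t < γ - x₂, equals νt + f(γ) - ν(γ - x₂) for γ - x₂ ≤ t < γ - x₁, and equals f(x₁ + t) + ν(x₂ - x₁) for t ≥ γ - x₁; moreover h is continuous and nondecreasing. -/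
/-- The minimizer in the single-slope-change case. -/
noncomputable def xopt (x₁ x₂ γ : ℝ) : ℝ → ℝ := fun t =>
  if t < γ - x₂ then x₂ else if t < γ - x₁ then γ - t else x₁

open Set

section SingleSlopeChange

variable {x₁ x₂ γ t : ℝ}

lemma xopt_of_lt (ht : t < γ - x₂) : xopt x₁ x₂ γ t = x₂ := if_pos ht

lemma xopt_of_mem_Ico (ht : t ∈ Ico (γ - x₂) (γ - x₁)) : xopt x₁ x₂ γ t = γ - t := by
  rw [xopt, if_neg ht.1.not_gt, if_pos ht.2]

lemma xopt_of_le (ht : γ - x₁ ≤ t) (hx : x₁ ≤ x₂) : xopt x₁ x₂ γ t = x₁ := by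
  rw [xopt, if_neg (by linarith), if_neg ht.not_gt]

lemma xopt_eq_max_min (hx : x₁ ≤ x₂) (t : ℝ) : xopt x₁ x₂ γ t = max x₁ (min (γ - t) x₂) := by
  unfold xopt
  split_ifs with h₂ h₁
  · rw [min_eq_right (by linarith), max_eq_right hx]
  · rw [min_eq_left (by linarith), max_eq_right (by linarith)]
  · rw [max_eq_left (min_le_of_left_le (by linarith))]

lemma xopt_mem_Icc (hx : x₁ ≤ x₂) (t : ℝ) : xopt x₁ x₂ γ t ∈ Icc x₁ x₂ := by
  rw [xopt_eq_max_min hx]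
  exact ⟨le_max_left _ _, max_le hx (min_le_right _ _)⟩

lemma continuous_xopt (hx : x₁ ≤ x₂) : Continuous (xopt x₁ x₂ γ) := by
  rw [funext (xopt_eq_max_min hx)]
  fun_prop

lemma antitone_xopt (hx : x₁ ≤ x₂) : Antitone (xopt x₁ x₂ γ) := by
  intro s t hst
  simp only [xopt_eq_max_min hx]
  gcongr

lemma monotone_xopt_add_self (hx : x₁ ≤ x₂) : Monotone (fun t => xopt x₁ x₂ γ t + t) := by
  have hclamp : ∀ t, xopt x₁ x₂ γ t + t = max (x₁ + t) (min γ (x₂ + t)) := fun t => by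
    rw [xopt_eq_max_min hx, ← max_add_add_right, ← min_add_add_right, sub_add_cancel]
  simp only [hclamp]
  exact (monotone_id.const_add x₁).max (monotone_const.min (monotone_id.const_add x₂))

lemma gfun_of_mem_Icc (ν : ℝ) {x : ℝ} (h : x ∈ Icc x₁ x₂) : gfun ν x₁ x₂ x = ν * (x₂ - x) := by
  unfold gfun
  split_ifs with hlt
  · ring
  · have : x = x₂ := le_antisymm h.2 (not_lt.1 fun h' => hlt ⟨h.1, h'⟩)
    simp [this]

end SingleSlopeChange

theorem value_function_single_slope_change_general
    (f : ℝ → ℝ) (ν x₁ x₂ γ : ℝ)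
    (hfc : Continuous f) (hfm : Monotone f)
    (hν : 0 < ν) (hx : x₁ < x₂) :
    (∀ t : ℝ, t < γ - x₂ →
      f (xopt x₁ x₂ γ t + t) + gfun ν x₁ x₂ (xopt x₁ x₂ γ t) = f (x₂ + t)) ∧
    (∀ t : ℝ, γ - x₂ ≤ t → t < γ - x₁ →
      f (xopt x₁ x₂ γ t + t) + gfun ν x₁ x₂ (xopt x₁ x₂ γ t)
        = ν * t + (f γ - ν * (γ - x₂))) ∧
    (∀ t : ℝ, γ - x₁ ≤ t →
      f (xopt x₁ x₂ γ t + t) + gfun ν x₁ x₂ (xopt x₁ x₂ γ t)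
        = f (x₁ + t) + ν * (x₂ - x₁)) ∧
    Continuous (fun t => f (xopt x₁ x₂ γ t + t) + gfun ν x₁ x₂ (xopt x₁ x₂ γ t)) ∧
    Monotone (fun t => f (xopt x₁ x₂ γ t + t) + gfun ν x₁ x₂ (xopt x₁ x₂ γ t)) := by
  have hg : ∀ t, gfun ν x₁ x₂ (xopt x₁ x₂ γ t) = ν * (x₂ - xopt x₁ x₂ γ t) := fun t =>
    gfun_of_mem_Icc ν (xopt_mem_Icc hx.le t)
  simp only [hg]
  refine ⟨fun t ht => ?_, fun t ht₂ ht₁ => ?_, fun t ht => ?_, ?_, ?_⟩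
  · rw [xopt_of_lt ht, sub_self, mul_zero, add_zero]
  · rw [xopt_of_mem_Ico ⟨ht₂, ht₁⟩, sub_add_cancel]
    ring
  · rw [xopt_of_le ht hx.le]
  · have hxopt := continuous_xopt (γ := γ) hx.le
    fun_prop
  · exact (hfm.comp (monotone_xopt_add_self hx.le)).add
      (Monotone.const_mul (fun _ _ hst => sub_le_sub_left (antitone_xopt hx.le hst) x₂) hν.le)

theorem value_function_single_slope_change
    (f : ℝ → ℝ) (ν x₁ x₂ γ : ℝ)
    (hfc : Continuous f) (hfm : Monotone f)
    (hν : 0 < ν) (hx : x₁ < x₂)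
    (hslope₁ : ∀ u v : ℝ, u < v → v ≤ γ → f v - f u < ν * (v - u))
    (hslope₂ : ∀ u v : ℝ, γ ≤ u → u ≤ v → ν * (v - u) ≤ f v - f u) :
    (∀ t : ℝ, t < γ - x₂ →
      f (xopt x₁ x₂ γ t + t) + gfun ν x₁ x₂ (xopt x₁ x₂ γ t) = f (x₂ + t)) ∧
    (∀ t : ℝ, γ - x₂ ≤ t → t < γ - x₁ →
      f (xopt x₁ x₂ γ t + t) + gfun ν x₁ x₂ (xopt x₁ x₂ γ t)
        = ν * t + (f γ - ν * (γ - x₂))) ∧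
    (∀ t : ℝ, γ - x₁ ≤ t →
      f (xopt x₁ x₂ γ t + t) + gfun ν x₁ x₂ (xopt x₁ x₂ γ t)
        = f (x₁ + t) + ν * (x₂ - x₁)) ∧
    Continuous (fun t => f (xopt x₁ x₂ γ t + t) + gfun ν x₁ x₂ (xopt x₁ x₂ γ t)) ∧
    Monotone (fun t => f (xopt x₁ x₂ γ t + t) + gfun ν x₁ x₂ (xopt x₁ x₂ γ t)) :=
  value_function_single_slope_change_general f ν x₁ x₂ γ hfc hfm hν hx
end
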